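/- arXiv:1907.13602 — 2 statements merged into one kernel-verified Lean document; each statement's English description precedes it below -/
import Mathlib

section
/- Let S ∈ {±1}^{n×r} be a Schur independent sign matrix and Q ∈ R^{r×r} an invertible matrix. Then SQ is a sign matrix (all entries ±1) if and only if Q is a signed permutation matrix. -/
open Matrix

/-- Schur independence of a family of sign vectors. -/
def SchurIndep {n r : ℕ} (s : Fin r → (Fin n → ℝ)) : Prop :=
  LinearIndependent ℝ (fun p : Option {p : Fin r × Fin r // p.1 < p.2} =>
    p.elim (fun _ => (1 : ℝ)) (fun q => s q.1.1 * s q.1.2))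

/-- A signed permutation matrix: `Q i j = ξ i` when `j = π i` and `0` otherwise,
for a permutation `π` and signs `ξ i ∈ {±1}`. -/
def IsSignedPermMatrix {r : ℕ} (Q : Matrix (Fin r) (Fin r) ℝ) : Prop :=
  ∃ (π : Equiv.Perm (Fin r)) (ξ : Fin r → ℝ), (∀ i, ξ i = 1 ∨ ξ i = -1) ∧
    ∀ i j, Q i j = if j = π i then ξ i else 0

/-!
Write `q_j` for the `j`-th column of `Q`. Since `S i k ^ 2 = 1`, expanding `(S q_j)_i ^ 2 = 1`
expresses `0` as a combination of the Schur family `1, s_k ⊙ s_l` with coefficients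
`∑ k, q_{kj} ^ 2 - 1` and `2 q_{kj} q_{lj}`. Schur independence makes them vanish, so every column
of `Q` is `±e_k` for some `k = κ j`. An invertible matrix has no zero row, so `κ` is onto, hence a
permutation.
-/

theorem sq_sum_eq_sum_sq_add_two_mul_sum_lt {ι R : Type*} [Fintype ι] [LinearOrder ι]
    [CommSemiring R] (y : ι → R) :
    (∑ k, y k) ^ 2 = ∑ k, y k ^ 2 + 2 * ∑ q : {p : ι × ι // p.1 < p.2}, y q.1.1 * y q.1.2 := by
  classical
  set f : ι × ι → R := fun p => y p.1 * y p.2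
  have hsplit : ∀ p, f p = (if p.1 < p.2 then f p else 0) + (if p.2 < p.1 then f p else 0) +
      (if p.1 = p.2 then f p else 0) := fun p => by
    rcases lt_trichotomy p.1 p.2 with h | h | h
    · simp [h, h.ne, h.not_gt]
    · simp [h]
    · simp [h, h.ne', h.not_gt]
  have hlt : ∑ p, (if p.1 < p.2 then f p else 0) = ∑ q : {p : ι × ι // p.1 < p.2}, f q :=
    (Finset.sum_filter _ _).symm.trans (Finset.sum_subtype _ (by simp) f)
  have hgt : ∑ p, (if p.2 < p.1 then f p else 0) = ∑ p, (if p.1 < p.2 then f p else 0) :=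
    Fintype.sum_equiv (Equiv.prodComm ι ι) _ _ fun p => by simp [f, mul_comm]
  have hdiag : ∑ p, (if p.1 = p.2 then f p else 0) = ∑ k, y k ^ 2 := by
    simp [f, Fintype.sum_prod_type, sq]
  calc (∑ k, y k) ^ 2 = ∑ p, f p := by
        rw [sq, Finset.sum_mul_sum, ← Finset.sum_product', Finset.univ_product_univ]
    _ = _ := by
        rw [Fintype.sum_congr _ _ hsplit, Finset.sum_add_distrib, Finset.sum_add_distrib, hgt,
          hlt, hdiag]
        ring

theorem SchurIndep.sum_sq_eq_one_of_sq_mulVec_eq_one {n r : ℕ} {S : Matrix (Fin n) (Fin r) ℝ}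
    (hSchur : SchurIndep (fun j i => S i j)) (hS : ∀ i j, S i j ^ 2 = 1) {a : Fin r → ℝ}
    (ha : ∀ i, (S *ᵥ a) i ^ 2 = 1) :
    ∑ k, a k ^ 2 = 1 ∧ ∀ k l, k < l → a k * a l = 0 := by
  have hexpand : ∀ i, (S *ᵥ a) i ^ 2 = ∑ k, a k ^ 2 +
      ∑ q : {p : Fin r × Fin r // p.1 < p.2}, 2 * (a q.1.1 * a q.1.2) * (S i q.1.1 * S i q.1.2) :=
    fun i => by
      rw [mulVec, dotProduct, sq_sum_eq_sum_sq_add_two_mul_sum_lt, Finset.mul_sum]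
      simp only [mul_pow, hS, one_mul]
      congr 1
      exact Fintype.sum_congr _ _ fun q => by ring
  set c : Option {p : Fin r × Fin r // p.1 < p.2} → ℝ :=
    fun o => o.elim (∑ k, a k ^ 2 - 1) fun q => 2 * (a q.1.1 * a q.1.2)
  have hc := Fintype.linearIndependent_iff.mp hSchur c <| by
    funext i
    simp only [Fintype.sum_option, Finset.sum_apply, Pi.smul_apply, smul_eq_mul,
      Pi.mul_apply, Option.elim, c, mul_one, Pi.zero_apply]
    linarith [hexpand i, ha i]
  refine ⟨sub_eq_zero.mp (hc none), fun k l hkl => ?_⟩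
  have hkl' : 2 * (a k * a l) = 0 := hc (some ⟨(k, l), hkl⟩)
  linarith

theorem exists_sq_eq_one_and_eq_zero_of_sum_sq_eq_one {ι R : Type*} [Fintype ι] [LinearOrder ι]
    [CommRing R] [NoZeroDivisors R] [Nontrivial R] {a : ι → R} (hsum : ∑ k, a k ^ 2 = 1)
    (hmul : ∀ k l, k < l → a k * a l = 0) :
    ∃ k, a k ^ 2 = 1 ∧ ∀ l, l ≠ k → a l = 0 := by
  obtain ⟨k, hk⟩ : ∃ k, a k ≠ 0 := by
    by_contra! h
    simp [h] at hsum
  have hzero : ∀ l, l ≠ k → a l = 0 := fun l hl => by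
    rcases hl.lt_or_gt with h | h
    · exact (mul_eq_zero.mp (hmul l k h)).resolve_right hk
    · exact (mul_eq_zero.mp (hmul k l h)).resolve_left hk
  refine ⟨k, ?_, hzero⟩
  rwa [Finset.sum_eq_single k (fun l _ hl => by simp [hzero l hl]) (by simp)] at hsum

theorem Matrix.surjective_of_isUnit_of_apply_eq_zero {ι R : Type*} [Fintype ι] [DecidableEq ι]
    [CommRing R] [Nontrivial R] {Q : Matrix ι ι R} (hQ : IsUnit Q) {κ : ι → ι}
    (hzero : ∀ j i, i ≠ κ j → Q i j = 0) : Function.Surjective κ := by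
  intro i
  by_contra! hi
  have hdet := (isUnit_iff_isUnit_det Q).mp hQ
  rw [det_eq_zero_of_row_eq_zero i fun j => hzero j i (hi j).symm] at hdet
  exact not_isUnit_zero hdet

theorem isSignedPermMatrix_of_bijective {r : ℕ} {Q : Matrix (Fin r) (Fin r) ℝ} {κ : Fin r → Fin r}
    (hκ : Function.Bijective κ) (hsign : ∀ j, Q (κ j) j ^ 2 = 1)
    (hzero : ∀ j i, i ≠ κ j → Q i j = 0) : IsSignedPermMatrix Q := by
  set e := Equiv.ofBijective κ hκ
  refine ⟨e.symm, fun i => Q i (e.symm i), fun i => sq_eq_one_iff.mp ?_, fun i j => ?_⟩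
  · simpa [e, Equiv.ofBijective_apply_symm_apply] using hsign (e.symm i)
  · split_ifs with hj
    · rw [hj]
    · exact hzero j i fun hi => hj (by rw [hi]; exact (e.symm_apply_apply j).symm)

theorem IsSignedPermMatrix.mul_apply_eq_one_or {m : Type*} {r : ℕ}
    {Q : Matrix (Fin r) (Fin r) ℝ} (hQ : IsSignedPermMatrix Q) {S : Matrix m (Fin r) ℝ}
    (hS : ∀ i j, S i j = 1 ∨ S i j = -1) (i : m) (j : Fin r) :
    (S * Q) i j = 1 ∨ (S * Q) i j = -1 := by
  obtain ⟨π, ξ, hξ, hQπ⟩ := hQ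
  have hentry : (S * Q) i j = S i (π.symm j) * ξ (π.symm j) := by
    rw [mul_apply, Finset.sum_eq_single (π.symm j)]
    · simp [hQπ]
    · intro k _ hk
      rw [hQπ, if_neg fun h => hk (by simp [h]), mul_zero]
    · simp
  rw [hentry]
  rcases hS i (π.symm j) with h | h <;> rcases hξ (π.symm j) with h' | h' <;> simp [h, h']

/-- For a Schur independent sign matrix `S` and invertible `Q`,
`SQ` is a sign matrix iff `Q` is a signed permutation matrix. -/
theorem signMatrix_mul_iff_signedPerm {n r : ℕ} (S : Matrix (Fin n) (Fin r) ℝ)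
    (hS : ∀ i j, S i j = 1 ∨ S i j = -1)
    (hSchur : SchurIndep (fun j i => S i j))
    (Q : Matrix (Fin r) (Fin r) ℝ) (hQ : IsUnit Q) :
    (∀ i j, (S * Q) i j = 1 ∨ (S * Q) i j = -1) ↔ IsSignedPermMatrix Q := by
  refine ⟨fun hSQ => ?_, fun hQπ => hQπ.mul_apply_eq_one_or hS⟩
  have hcol : ∀ j, ∃ k, Q k j ^ 2 = 1 ∧ ∀ l, l ≠ k → Q l j = 0 := fun j => by
    obtain ⟨hsum, hmul⟩ := hSchur.sum_sq_eq_one_of_sq_mulVec_eq_one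
      (fun i k => sq_eq_one_iff.mpr (hS i k)) (a := fun k => Q k j)
      (fun i => sq_eq_one_iff.mpr (hSQ i j))
    exact exists_sq_eq_one_and_eq_zero_of_sum_sq_eq_one hsum hmul
  choose κ hsign hzero using hcol
  exact isSignedPermMatrix_of_bijective
    (surjective_of_isUnit_of_apply_eq_zero hQ hzero).bijective_of_finite hsign hzero
end

section
/- Let C = Z Wᵀ with Z ∈ {0,1}^{n×r} Schur independent and W ∈ R^{m×r} of full column rank. If C = Z̃ W̃ᵀ is another decomposition with Z̃ ∈ {0,1}^{n×r} and W̃ ∈ R^{m×r}, then there is a permutation matrix Π with Z̃ = Z Π and W̃ = W Π. -/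
open Matrix

/-- Schur independence of a family of binary vectors. -/
def BinSchurIndep {n r : ℕ} (z : Fin r → (Fin n → ℝ)) : Prop :=
  LinearIndependent ℝ (fun p : Option (Fin r ⊕ {p : Fin r × Fin r // p.1 < p.2}) =>
    p.elim (fun _ => (1 : ℝ)) (Sum.elim z (fun q => z q.1.1 * z q.1.2)))

/-- A permutation matrix. -/
def IsPermMatrix {r : ℕ} (Q : Matrix (Fin r) (Fin r) ℝ) : Prop :=
  ∃ π : Equiv.Perm (Fin r), ∀ i j, Q i j = if j = π i then 1 else 0

/-!
Two factorizations `Z Wᵀ = Z' W'ᵀ` through `r` columns, with `Z` and `W` of rank `r`, differ by an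
invertible `A`: `Z' = Z A` and `Wᵀ = A W'ᵀ`. A column `Z a` of `Z'` is binary, i.e. idempotent for the
entrywise product; expanding `(Z a)² = Z a` with `z_j² = z_j` writes `0` as a combination of
`z_j` and `z_j z_k` (`j < k`) with coefficients `a_j² - a_j` and `2 a_j a_k`, so Schur independence
makes every column of `A` zero or a standard basis vector. Being invertible, `A` is then a
permutation matrix, hence orthogonal, and `Wᵀ = A W'ᵀ` gives `W' = W A`.
-/

theorem Pi.isIdempotentElem_iff_forall_eq_zero_or_one {ι K : Type*} [MonoidWithZero K]
    [IsLeftCancelMulZero K] {v : ι → K} : IsIdempotentElem v ↔ ∀ i, v i = 0 ∨ v i = 1 := by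
  simp only [← IsIdempotentElem.iff_eq_zero_or_one, IsIdempotentElem, funext_iff, Pi.mul_apply]

theorem Fintype.sum_mul_sum_eq_sum_mul_self_add_two_mul_sum_lt {ι R : Type*} [Fintype ι]
    [LinearOrder ι] [CommSemiring R] (f : ι → R) :
    (∑ i, f i) * ∑ i, f i =
      ∑ i, f i * f i + 2 * ∑ p : {p : ι × ι // p.1 < p.2}, f p.1.1 * f p.1.2 := by
  have split : ∀ i j, f i * f j = (if i < j then f i * f j else 0) +
      (if i = j then f i * f j else 0) + (if j < i then f j * f i else 0) := by
    intro i j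
    rcases lt_trichotomy i j with h | rfl | h
    · simp [h, h.ne, h.not_gt]
    · simp
    · simp [h, h.ne', h.not_gt, mul_comm]
  have sum_lt : ∑ i, ∑ j, (if i < j then f i * f j else 0) =
      ∑ p : {p : ι × ι // p.1 < p.2}, f p.1.1 * f p.1.2 := by
    rw [← Fintype.sum_prod_type', ← Finset.sum_filter, ← Finset.sum_subtype_eq_sum_filter,
      Finset.subtype_univ]
  rw [Finset.sum_mul_sum,
    Finset.sum_congr rfl fun i _ => Finset.sum_congr rfl fun j _ => split i j]
  simp only [Finset.sum_add_distrib, Finset.sum_ite_eq, Finset.mem_univ, if_true]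
  rw [Finset.sum_comm (f := fun i j => if j < i then f j * f i else 0), sum_lt]
  ring

theorem Function.eq_zero_or_eq_single_of_isIdempotentElem {ι K : Type*} [DecidableEq ι]
    [MonoidWithZero K] [IsLeftCancelMulZero K] {a : ι → K} (ha : ∀ j, IsIdempotentElem (a j))
    (hortho : ∀ j k, j ≠ k → a j * a k = 0) : a = 0 ∨ ∃ j, a = Pi.single j 1 := by
  by_cases hzero : a = 0
  · exact .inl hzero
  obtain ⟨j, hj⟩ := Function.ne_iff.mp hzero
  have hj1 : a j = 1 := (IsIdempotentElem.iff_eq_zero_or_one.mp (ha j)).resolve_left hj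
  refine .inr ⟨j, funext fun k => ?_⟩
  rcases eq_or_ne k j with rfl | hkj
  · simp [hj1]
  · simpa [hkj, hj1] using hortho j k hkj.symm

namespace BinSchurIndep

variable {n r : ℕ} {z : Fin r → Fin n → ℝ}

theorem linearIndependent (hSchur : BinSchurIndep z) : LinearIndependent ℝ z :=
  hSchur.comp (fun j => some (.inl j)) fun _ _ h => Sum.inl_injective (Option.some_injective _ h)

theorem eq_zero_or_eq_single (hSchur : BinSchurIndep z) (hz : ∀ j, IsIdempotentElem (z j))
    {a : Fin r → ℝ} (ha : IsIdempotentElem (∑ j, a j • z j)) :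
    a = 0 ∨ ∃ j, a = Pi.single j 1 := by
  set c : Option (Fin r ⊕ {p : Fin r × Fin r // p.1 < p.2}) → ℝ :=
    fun p => p.elim 0 (Sum.elim (fun j => a j * a j - a j) fun q => 2 * (a q.1.1 * a q.1.2))
  have expand := Fintype.sum_mul_sum_eq_sum_mul_self_add_two_mul_sum_lt fun j => a j • z j
  simp only [smul_mul_smul_comm, (hz _).eq] at expand
  -- `v * v - v = 0` for `v = ∑ j, a j • z j`, expanded with `z j * z j = z j` over the Schur family
  have hc : ∑ p, c p • (p.elim (fun _ => (1 : ℝ))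
      (Sum.elim z (fun q => z q.1.1 * z q.1.2)) : Fin n → ℝ) = 0 := by
    simp only [c, Fintype.sum_option, Fintype.sum_sum_type, Option.elim, Sum.elim_inl,
      Sum.elim_inr, zero_smul, zero_add, sub_smul, Finset.sum_sub_distrib, two_mul, add_smul,
      Finset.sum_add_distrib]
    rw [← ha.eq, expand, two_mul]
    abel
  have hzero := Fintype.linearIndependent_iff.mp hSchur c hc
  refine Function.eq_zero_or_eq_single_of_isIdempotentElem
    (fun j => sub_eq_zero.mp (by simpa [c] using hzero (some (.inl j)))) fun j k hjk => ?_
  rcases hjk.lt_or_gt with h | h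
  · simpa [c] using hzero (some (.inr ⟨(j, k), h⟩))
  · simpa [c, mul_comm] using hzero (some (.inr ⟨(k, j), h⟩))

end BinSchurIndep

namespace Matrix

theorem exists_eq_permMatrix_of_isUnit {ι R : Type*} [Fintype ι] [DecidableEq ι]
    [CommRing R] [Nontrivial R] {A : Matrix ι ι R} (hA : IsUnit A)
    (hcol : ∀ k, A.col k = 0 ∨ ∃ j, A.col k = Pi.single j 1) :
    ∃ σ : Equiv.Perm ι, A = σ.permMatrix R := by
  have hind := linearIndependent_cols_of_isUnit hA
  choose τ hτ using fun k => (hcol k).resolve_left (hind.ne_zero k)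
  have hτinj : Function.Injective τ := fun k k' h => hind.injective (by rw [hτ, hτ, h])
  let σ := Equiv.ofBijective τ hτinj.bijective_of_finite
  refine ⟨σ.symm, Matrix.ext fun i k => ?_⟩
  change A.col k i = _
  simp only [hτ, Pi.single_apply, Equiv.Perm.permMatrix, PEquiv.toMatrix_apply,
    Equiv.toPEquiv_apply, Option.mem_def, Option.some_inj, Equiv.symm_apply_eq, σ,
    Equiv.ofBijective_apply]

theorem exists_mul_eq_one_of_rank_eq {m n K : Type*} [Fintype m] [Fintype n]
    [DecidableEq n] [Field K] {M : Matrix m n K} (h : M.rank = Fintype.card n) :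
    ∃ B : Matrix n m K, B * M = 1 := by
  rw [← vecMul_surjective_iff_exists_left_inverse]
  have hrange : LinearMap.range Mᵀ.mulVecLin = ⊤ := by
    apply Submodule.eq_top_of_finrank_eq
    rw [← Matrix.rank, rank_transpose, h, Module.finrank_fintype_fun_eq_card]
  intro y
  obtain ⟨x, hx⟩ := LinearMap.range_eq_top.mp hrange y
  exact ⟨x, (mulVec_transpose M x).symm.trans hx⟩

theorem exists_isUnit_mul_eq_of_mul_transpose_eq {n m r K : Type*} [Fintype n] [Fintype m]
    [Fintype r] [DecidableEq r] [Field K] {Z Z' : Matrix n r K} {W W' : Matrix m r K}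
    (hZ : Z.rank = Fintype.card r) (hW : W.rank = Fintype.card r) (h : Z * Wᵀ = Z' * W'ᵀ) :
    ∃ A : Matrix r r K, IsUnit A ∧ Z' = Z * A ∧ Wᵀ = A * W'ᵀ := by
  obtain ⟨L, hL⟩ := exists_mul_eq_one_of_rank_eq hZ
  obtain ⟨G, hG⟩ := exists_mul_eq_one_of_rank_eq hW
  set B := W'ᵀ * Gᵀ
  have hZB : Z = Z' * B := by
    rw [← Matrix.mul_assoc, ← h, Matrix.mul_assoc, ← transpose_mul, hG, transpose_one,
      Matrix.mul_one]
  have hB : IsUnit B := (isUnit_iff_isUnit_det B).mpr <|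
    isUnit_det_of_left_inverse (B := L * Z') (by rw [Matrix.mul_assoc, ← hZB, hL])
  have hZ' : Z' = Z * B⁻¹ := by
    rw [hZB, Matrix.mul_assoc, mul_nonsing_inv _ ((isUnit_iff_isUnit_det B).mp hB),
      Matrix.mul_one]
  refine ⟨B⁻¹, isUnit_nonsing_inv_iff.mpr hB, hZ', ?_⟩
  calc Wᵀ = L * (Z * Wᵀ) := by rw [← Matrix.mul_assoc, hL, Matrix.one_mul]
    _ = (L * Z) * (B⁻¹ * W'ᵀ) := by rw [h, hZ']; simp only [Matrix.mul_assoc]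
    _ = B⁻¹ * W'ᵀ := by rw [hL, Matrix.one_mul]

theorem eq_mul_permMatrix_of_transpose_eq {m ι R : Type*} [Fintype ι] [DecidableEq ι]
    [CommSemiring R] {W W' : Matrix m ι R} {σ : Equiv.Perm ι}
    (h : Wᵀ = σ.permMatrix R * W'ᵀ) : W' = W * σ.permMatrix R := by
  rw [← transpose_transpose W, h, transpose_mul, transpose_transpose, transpose_permMatrix,
    Matrix.mul_assoc, ← permMatrix_mul, mul_inv_cancel, permMatrix_one, Matrix.mul_one]

end Matrix

theorem isPermMatrix_permMatrix {r : ℕ} (σ : Equiv.Perm (Fin r)) :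
    IsPermMatrix (σ.permMatrix ℝ) :=
  ⟨σ, fun i j => by simp [PEquiv.toMatrix_apply, eq_comm]⟩

/-- Uniqueness, up to permutation, of a minimal binary component
decomposition with Schur independent binary component and full-column-rank weights. -/
theorem binary_component_decomposition_uniqueness {n m r : ℕ}
    (Z Z' : Matrix (Fin n) (Fin r) ℝ) (W W' : Matrix (Fin m) (Fin r) ℝ)
    (hZ : ∀ i j, Z i j = 0 ∨ Z i j = 1)
    (hSchur : BinSchurIndep (fun j i => Z i j))
    (hW : W.rank = r)
    (hZ' : ∀ i j, Z' i j = 0 ∨ Z' i j = 1)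
    (hC : Z * Wᵀ = Z' * W'ᵀ) :
    ∃ P : Matrix (Fin r) (Fin r) ℝ, IsPermMatrix P ∧ Z' = Z * P ∧ W' = W * P := by
  have hZrank : Z.rank = Fintype.card (Fin r) := by
    rw [← rank_transpose]
    exact hSchur.linearIndependent.rank_matrix
  obtain ⟨A, hA, hZ'A, hWA⟩ :=
    exists_isUnit_mul_eq_of_mul_transpose_eq hZrank (by rwa [Fintype.card_fin]) hC
  have hcol : ∀ k, A.col k = 0 ∨ ∃ j, A.col k = Pi.single j 1 := by
    intro k
    refine hSchur.eq_zero_or_eq_single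
      (fun j => Pi.isIdempotentElem_iff_forall_eq_zero_or_one.mpr fun i => hZ i j) ?_
    have hZ'col : ∑ j, A j k • (fun i => Z i j) = fun i => Z' i k := by
      ext i
      simp [hZ'A, Matrix.mul_apply, mul_comm]
    exact hZ'col ▸ Pi.isIdempotentElem_iff_forall_eq_zero_or_one.mpr fun i => hZ' i k
  obtain ⟨σ, rfl⟩ := exists_eq_permMatrix_of_isUnit hA hcol
  exact ⟨_, isPermMatrix_permMatrix σ, hZ'A, eq_mul_permMatrix_of_transpose_eq hWA⟩
end
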